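/- The n×n matrix A with entries A_{jk} = exp(zʲ · conj(zᵏ)) (Hermitian pairing on ℂᵐ) is positive definite whenever z¹, …, zⁿ ∈ ℂᵐ are distinct; in particular det A > 0. -/

import Mathlib

open scoped ComplexConjugate ComplexOrder

/-- Separation lemma: if a linear combination of evaluations of all holomorphic
monomials at distinct points vanishes, the coefficients vanish. -/
private lemma bf_sep {n m : ℕ} (z : Fin n → (Fin m → ℂ)) (hz : Function.Injective z)
    (c : Fin n → ℂ)
    (H : ∀ (d : ℕ) (f : Fin d → Fin m), ∑ j, c j * ∏ i, z j (f i) = 0) :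
    c = 0 := by
  funext j₀
  rw [Pi.zero_apply]
  set K : Finset (Fin n) := Finset.univ.erase j₀ with hKdef
  have hexists : ∀ k ∈ K, ∃ i, z j₀ i ≠ z k i := by
    intro k hk
    have hne : k ≠ j₀ := (Finset.mem_erase.mp hk).1
    by_contra h
    push_neg at h
    exact hne (hz (funext fun i => (h i).symm))
  rcases Finset.eq_empty_or_nonempty K with hK | ⟨k₀, hk₀⟩
  · -- then `univ = {j₀}`
    have huniv : (Finset.univ : Finset (Fin n)) = {j₀} := by
      rcases (Finset.erase_eq_empty_iff _ _).mp hK with h | h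
      · exact absurd (Finset.mem_univ j₀) (h ▸ Finset.notMem_empty j₀)
      · exact h
    have h0 := H 0 (Fin.elim0)
    rw [huniv] at h0
    simpa using h0
  · obtain ⟨i₀, -⟩ := hexists k₀ hk₀
    set l : Fin n → Fin m := fun k => if h : ∃ i, z j₀ i ≠ z k i then h.choose else i₀ with hldef
    have hl : ∀ k ∈ K, z j₀ (l k) ≠ z k (l k) := by
      intro k hk
      have h := hexists k hk
      simp only [hldef, dif_pos h]
      exact h.choose_spec
    have key : ∑ j, c j * ∏ k ∈ K, (z j (l k) - z k (l k)) = 0 := by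
      have expand : ∀ j : Fin n, ∏ k ∈ K, (z j (l k) - z k (l k))
          = ∑ t ∈ K.powerset, (∏ k ∈ t, z j (l k)) * ∏ k ∈ K \ t, (-(z k (l k))) := by
        intro j
        rw [← Finset.prod_add]
        exact Finset.prod_congr rfl fun k _ => by ring
      have step : ∑ j, c j * ∏ k ∈ K, (z j (l k) - z k (l k))
          = ∑ t ∈ K.powerset, ∑ j, c j *
              ((∏ k ∈ t, z j (l k)) * ∏ k ∈ K \ t, (-(z k (l k)))) := by
        rw [Finset.sum_comm]
        exact Finset.sum_congr rfl fun j _ => by rw [expand j, Finset.mul_sum]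
      rw [step]
      apply Finset.sum_eq_zero
      intro t _
      have hmon : ∀ j : Fin n, ∏ k ∈ t, z j (l k)
          = ∏ i : Fin t.card, z j (l ((t.orderIsoOfFin rfl) i)) := by
        intro j
        rw [← Finset.prod_coe_sort t (fun k => z j (l k))]
        exact (Equiv.prod_comp (t.orderIsoOfFin rfl).toEquiv
          (fun k : t => z j (l (k : Fin n)))).symm
      have : ∑ j, c j * ((∏ k ∈ t, z j (l k)) * ∏ k ∈ K \ t, (-(z k (l k))))
          = (∑ j, c j * ∏ i : Fin t.card, z j (l ((t.orderIsoOfFin rfl) i)))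
              * ∏ k ∈ K \ t, (-(z k (l k))) := by
        rw [Finset.sum_mul]
        exact Finset.sum_congr rfl fun j _ => by rw [hmon j, mul_assoc]
      rw [this, H t.card (fun i => l ((t.orderIsoOfFin rfl) i)), zero_mul]
    rw [Finset.sum_eq_single j₀] at key
    · have hP : ∏ k ∈ K, (z j₀ (l k) - z k (l k)) ≠ 0 :=
        Finset.prod_ne_zero_iff.mpr fun k hk => sub_ne_zero.mpr (hl k hk)
      exact (mul_eq_zero.mp key).resolve_right hP
    · intro j _ hj
      have hjK : j ∈ K := Finset.mem_erase.mpr ⟨hj, Finset.mem_univ j⟩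
      rw [Finset.prod_eq_zero hjK (sub_self (z j (l j))), mul_zero]
    · intro h
      exact absurd (Finset.mem_univ j₀) h

theorem bargmann_fock_kernel_posdef (n m : ℕ) (z : Fin n → (Fin m → ℂ))
    (hz : Function.Injective z) :
    (Matrix.of fun j k : Fin n =>
        Complex.exp (∑ l, z j l * conj (z k l))).PosDef ∧
    ((Matrix.of fun j k : Fin n =>
        Complex.exp (∑ l, z j l * conj (z k l))).det.im = 0 ∧
      0 < (Matrix.of fun j k : Fin n =>
        Complex.exp (∑ l, z j l * conj (z k l))).det.re) := by
  have hpd : (Matrix.of fun j k : Fin n =>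
      Complex.exp (∑ l, z j l * conj (z k l))).PosDef := by
    refine Matrix.PosDef.of_dotProduct_mulVec_pos ?_ ?_
    · -- Hermitian
      ext j k
      rw [Matrix.conjTranspose_apply, Matrix.of_apply, Matrix.of_apply]
      show (starRingEnd ℂ) (Complex.exp (∑ l, z k l * conj (z j l))) = _
      rw [← Complex.exp_conj]
      congr 1
      rw [map_sum]
      exact Finset.sum_congr rfl fun l _ => by
        rw [map_mul, Complex.conj_conj, mul_comm]
    · intro x hx
      -- the nonnegative coefficients of the series expansion of the quadratic form
      set t : ℕ → ℝ := fun d =>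
        (∑ f : Fin d → Fin m,
          Complex.normSq (∑ k, x k * conj (∏ i, z k (f i)))) / (Nat.factorial d : ℝ) with htdef
      have pointwise : ∀ d : ℕ,
          ∑ j, ∑ k, conj (x j) * x k * ((∑ l, z j l * conj (z k l)) ^ d / (d.factorial : ℂ))
            = ((t d : ℝ) : ℂ) := by
        intro d
        have hpow : ∀ j k : Fin n, (∑ l, z j l * conj (z k l)) ^ d
            = ∑ f : Fin d → Fin m, (∏ i, z j (f i)) * conj (∏ i, z k (f i)) := by
          intro j k
          rw [Fintype.sum_pow]
          exact Finset.sum_congr rfl fun f _ => by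
            rw [Finset.prod_mul_distrib, map_prod]
        have key : ∑ j, ∑ k, conj (x j) * x k * (∑ l, z j l * conj (z k l)) ^ d
            = ∑ f : Fin d → Fin m,
                ((∑ k, x k * conj (∏ i, z k (f i))) *
                  conj (∑ k, x k * conj (∏ i, z k (f i)))) := by
          have h1 : ∑ j, ∑ k, conj (x j) * x k * (∑ l, z j l * conj (z k l)) ^ d
              = ∑ j, ∑ k, ∑ f : Fin d → Fin m,
                  (conj (x j) * ∏ i, z j (f i)) * (x k * conj (∏ i, z k (f i))) := by
            refine Finset.sum_congr rfl fun j _ => Finset.sum_congr rfl fun k _ => ?_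
            rw [hpow j k, Finset.mul_sum]
            exact Finset.sum_congr rfl fun f _ => by ring
          rw [h1]
          have h2 : ∑ j, ∑ k, ∑ f : Fin d → Fin m,
                  (conj (x j) * ∏ i, z j (f i)) * (x k * conj (∏ i, z k (f i)))
              = ∑ f : Fin d → Fin m, ∑ j, ∑ k,
                  (conj (x j) * ∏ i, z j (f i)) * (x k * conj (∏ i, z k (f i))) :=
            calc ∑ j, ∑ k, ∑ f : Fin d → Fin m,
                  (conj (x j) * ∏ i, z j (f i)) * (x k * conj (∏ i, z k (f i)))
                = ∑ j, ∑ f : Fin d → Fin m, ∑ k,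
                  (conj (x j) * ∏ i, z j (f i)) * (x k * conj (∏ i, z k (f i))) :=
                  Finset.sum_congr rfl fun j _ => Finset.sum_comm
              _ = ∑ f : Fin d → Fin m, ∑ j, ∑ k,
                  (conj (x j) * ∏ i, z j (f i)) * (x k * conj (∏ i, z k (f i))) :=
                  Finset.sum_comm
          rw [h2]
          refine Finset.sum_congr rfl fun f _ => ?_
          rw [← Finset.sum_mul_sum, mul_comm]
          congr 1
          rw [map_sum]
          exact Finset.sum_congr rfl fun j _ => by
            rw [map_mul, Complex.conj_conj]
        have : ∑ j, ∑ k, conj (x j) * x k * ((∑ l, z j l * conj (z k l)) ^ d / (d.factorial : ℂ))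
            = (∑ j, ∑ k, conj (x j) * x k * (∑ l, z j l * conj (z k l)) ^ d) / (d.factorial : ℂ) := by
          rw [Finset.sum_div]
          exact Finset.sum_congr rfl fun j _ => by
            rw [Finset.sum_div]
            exact Finset.sum_congr rfl fun k _ => by ring
        rw [this, key, htdef]
        push_cast
        congr 1
        exact Finset.sum_congr rfl fun f _ => (Complex.mul_conj _)
      -- summability facts
      have hsummC : ∀ j k : Fin n, Summable (fun d : ℕ =>
          conj (x j) * x k * ((∑ l, z j l * conj (z k l)) ^ d / (d.factorial : ℂ))) := fun j k =>
        (NormedSpace.expSeries_div_summable (∑ l, z j l * conj (z k l))).mul_left _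
      have hsumInner : ∀ j : Fin n, Summable (fun d : ℕ =>
          ∑ k, conj (x j) * x k * ((∑ l, z j l * conj (z k l)) ^ d / (d.factorial : ℂ))) := fun j =>
        summable_sum fun k _ => hsummC j k
      have hsumC : Summable (fun d : ℕ =>
          ∑ j, ∑ k, conj (x j) * x k * ((∑ l, z j l * conj (z k l)) ^ d / (d.factorial : ℂ))) :=
        summable_sum fun j _ => hsumInner j
      have hsumt : Summable t := by
        rw [← Complex.summable_ofReal]
        exact hsumC.congr pointwise
      -- the quadratic form equals the sum of the series
      have hQ : dotProduct (star x)
            (Matrix.mulVec (Matrix.of fun j k : Fin n =>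
              Complex.exp (∑ l, z j l * conj (z k l))) x)
          = ((∑' d, t d : ℝ) : ℂ) := by
        calc dotProduct (star x)
              (Matrix.mulVec (Matrix.of fun j k : Fin n =>
                Complex.exp (∑ l, z j l * conj (z k l))) x)
            = ∑ j, ∑ k, conj (x j) * x k * Complex.exp (∑ l, z j l * conj (z k l)) := by
              simp only [dotProduct, Matrix.mulVec, Matrix.of_apply, Pi.star_apply,
                Finset.mul_sum]
              exact Finset.sum_congr rfl fun j _ => Finset.sum_congr rfl fun k _ => by
                rw [Complex.star_def]; ring
          _ = ∑ j, ∑ k, ∑' d : ℕ,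
                conj (x j) * x k * ((∑ l, z j l * conj (z k l)) ^ d / (d.factorial : ℂ)) := by
              refine Finset.sum_congr rfl fun j _ => Finset.sum_congr rfl fun k _ => ?_
              rw [Complex.exp_eq_exp_ℂ, NormedSpace.exp_eq_tsum_div, ← tsum_mul_left]
          _ = ∑ j, ∑' d : ℕ, ∑ k,
                conj (x j) * x k * ((∑ l, z j l * conj (z k l)) ^ d / (d.factorial : ℂ)) := by
              exact Finset.sum_congr rfl fun j _ => (Summable.tsum_finsetSum fun k _ => hsummC j k).symm
          _ = ∑' d : ℕ, ∑ j, ∑ k,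
                conj (x j) * x k * ((∑ l, z j l * conj (z k l)) ^ d / (d.factorial : ℂ)) :=
              (Summable.tsum_finsetSum fun j _ => hsumInner j).symm
          _ = ∑' d : ℕ, ((t d : ℝ) : ℂ) := tsum_congr pointwise
          _ = ((∑' d, t d : ℝ) : ℂ) := (Complex.ofReal_tsum t).symm
      rw [hQ]
      have ht_nonneg : ∀ d, 0 ≤ t d := fun d =>
        div_nonneg (Finset.sum_nonneg fun f _ => Complex.normSq_nonneg _)
          (Nat.cast_nonneg _)
      have hpos : ∃ d, 0 < t d := by
        by_contra h
        push_neg at h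
        have hzero : ∀ (d : ℕ) (f : Fin d → Fin m),
            (∑ k, x k * conj (∏ i, z k (f i))) = 0 := by
          intro d f
          have h1 : t d = 0 := le_antisymm (h d) (ht_nonneg d)
          rw [htdef] at h1
          have h2 : (∑ f : Fin d → Fin m,
              Complex.normSq (∑ k, x k * conj (∏ i, z k (f i)))) = 0 := by
            rcases div_eq_zero_iff.mp h1 with h2 | h2
            · exact h2
            · exact absurd h2 (Nat.cast_ne_zero.mpr d.factorial_ne_zero)
          have h3 := (Finset.sum_eq_zero_iff_of_nonneg
            (fun f _ => Complex.normSq_nonneg _)).mp h2 f (Finset.mem_univ f)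
          exact Complex.normSq_eq_zero.mp h3
        have hc : (fun j => conj (x j)) = 0 := by
          apply bf_sep z hz
          intro d f
          have h0 := hzero d f
          calc ∑ j, conj (x j) * ∏ i, z j (f i)
              = conj (∑ k, x k * conj (∏ i, z k (f i))) := by
                rw [map_sum]
                exact Finset.sum_congr rfl fun k _ => by
                  rw [map_mul, Complex.conj_conj]
            _ = 0 := by rw [h0, map_zero]
        apply hx
        funext j
        have := congr_fun hc j
        simpa using this
      obtain ⟨d₀, hd₀⟩ := hpos
      have : (0 : ℝ) < ∑' d, t d := Summable.tsum_pos hsumt ht_nonneg d₀ hd₀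
      calc (0 : ℂ) = ((0 : ℝ) : ℂ) := by norm_num
        _ < ((∑' d, t d : ℝ) : ℂ) := Complex.real_lt_real.mpr this
  refine ⟨hpd, ?_, ?_⟩
  · have hdet := hpd.det_pos
    rw [Complex.lt_def] at hdet
    simpa using hdet.2.symm
  · have hdet := hpd.det_pos
    rw [Complex.lt_def] at hdet
    simpa using hdet.1
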